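/- (Lemma 4.6, Brezis–Lieb type result for the coupling term.) Let N ≥ 3 be an integer, let 0 ≤ s₂ < 2, and let α > 1, β > 1 with α + β = 2^*(s₂). Let (u_n) and (v_n) be sequences of measurable functions ℝ^N → ℝ with sup_n ∫_{ℝ^N} ( |u_n(x)|^{2^*(s₂)} + |v_n(x)|^{2^*(s₂)} ) ‖x‖^{−s₂} dx < ∞, and suppose u_n → u and v_n → v almost everywhere on ℝ^N. Then ∫_{ℝ^N} ( |u_n(x)|^{α} |v_n(x)|^{β} − |u_n(x) − u(x)|^{α} |v_n(x) − v(x)|^{β} ) ‖x‖^{−s₂} dx → ∫_{ℝ^N} |u(x)|^{α} |v(x)|^{β} ‖x‖^{−s₂} dx as n → ∞. -/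

import Mathlib

/-!
Write `j(a, c) = |a|^α |c|^β` and `p = α + β`, and absorb the weight into the measure
`‖x‖^(-s₂) dx`. The mean value theorem for `t ↦ t^α`, together with the homogeneity of `j`,
gives for every `ε > 0` a constant `C_ε` with
`|j(a + b, c + d) - j(a, c) - j(b, d)| ≤ ε (|a|^p + |c|^p) + C_ε (|b|^p + |d|^p)`.
Take `a = uₙ - u`, `b = u`, `c = vₙ - v`, `d = v`. The `ε`-term has integral `O(ε)` uniformly
in `n` by the `Lᵖ` bound, and what the integrand exceeds it by is dominated by the integrable
function `C_ε (|u|^p + |v|^p)` (Fatou) and tends to `0` a.e. Dominated convergence and `ε → 0`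
then give `L¹` convergence of `j(uₙ, vₙ) - j(uₙ - u, vₙ - v)` to `j(u, v)`.
-/

open MeasureTheory Filter Topology
open scoped NNReal ENNReal

theorem Real.rpow_add_le_mul_rpow_add_rpow {a b p : ℝ} (ha : 0 ≤ a) (hb : 0 ≤ b)
    (hp : 1 ≤ p) : (a + b) ^ p ≤ 2 ^ (p - 1) * (a ^ p + b ^ p) := by
  lift a to ℝ≥0 using ha
  lift b to ℝ≥0 using hb
  exact_mod_cast NNReal.rpow_add_le_mul_rpow_add_rpow a b hp

theorem rpow_mul_rpow_le_rpow_add_rpow {a b q r : ℝ} (ha : 0 ≤ a) (hb : 0 ≤ b) (hq : 0 ≤ q)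
    (hr : 0 ≤ r) : a ^ q * b ^ r ≤ a ^ (q + r) + b ^ (q + r) := by
  rcases le_total a b with h | h
  · calc a ^ q * b ^ r ≤ b ^ q * b ^ r := by gcongr
      _ = b ^ (q + r) := (Real.rpow_add_of_nonneg hb hq hr).symm
      _ ≤ _ := le_add_of_nonneg_left (by positivity)
  · calc a ^ q * b ^ r ≤ a ^ q * a ^ r := by gcongr
      _ = a ^ (q + r) := (Real.rpow_add_of_nonneg ha hq hr).symm
      _ ≤ _ := le_add_of_nonneg_right (by positivity)

theorem abs_rpow_sub_rpow_le {α x y : ℝ} (hα : 1 ≤ α) (hx : 0 ≤ x) (hy : 0 ≤ y) :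
    |x ^ α - y ^ α| ≤ α * max x y ^ (α - 1) * |x - y| := by
  have hderiv : ∀ t ∈ Set.Icc 0 (max x y),
      HasDerivWithinAt (fun t => t ^ α) (α * t ^ (α - 1)) (Set.Icc 0 (max x y)) t :=
    fun t _ => (Real.hasDerivAt_rpow_const (Or.inr hα)).hasDerivWithinAt
  have hbound : ∀ t ∈ Set.Icc 0 (max x y), ‖α * t ^ (α - 1)‖ ≤ α * max x y ^ (α - 1) := by
    rintro t ⟨ht, htm⟩
    rw [Real.norm_eq_abs, abs_of_nonneg (by positivity)]
    gcongr
  simpa only [Real.norm_eq_abs] using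
    (convex_Icc 0 (max x y)).norm_image_sub_le_of_norm_hasDerivWithin_le hderiv hbound
      ⟨hy, le_max_right x y⟩ ⟨hx, le_max_left x y⟩

theorem abs_abs_add_rpow_sub_le {α : ℝ} (hα : 1 ≤ α) (a b : ℝ) :
    |(|a + b| ^ α - |a| ^ α)| ≤ α * (|a| + |b|) ^ (α - 1) * |b| := by
  calc |(|a + b| ^ α - |a| ^ α)| ≤ α * max |a + b| |a| ^ (α - 1) * |(|a + b| - |a|)| :=
        abs_rpow_sub_rpow_le hα (abs_nonneg _) (abs_nonneg _)
    _ ≤ α * (|a| + |b|) ^ (α - 1) * |b| := by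
        have hmax : max |a + b| |a| ≤ |a| + |b| :=
          max_le (abs_add_le a b) (le_add_of_nonneg_right (abs_nonneg b))
        have hdiff : |(|a + b| - |a|)| ≤ |b| := by
          simpa using abs_abs_sub_abs_le_abs_sub (a + b) a
        gcongr

theorem abs_rpow_mul_rpow_add_sub_le {α β : ℝ} (hα : 1 ≤ α) (hβ : 1 ≤ β) (a b c d : ℝ) :
    |(|a + b| ^ α * |c + d| ^ β - |a| ^ α * |c| ^ β)| ≤
      (α + β) * (|a| + |c| + (|b| + |d|)) ^ (α + β - 1) * (|b| + |d|) := by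
  set T := |a| + |c| + (|b| + |d|)
  set S := |b| + |d|
  have hTpow : T ^ (α + β - 1) = T ^ (α - 1) * T ^ β := by
    rw [← Real.rpow_add_of_nonneg (by positivity) (by linarith) (by linarith)]; ring_nf
  have hTpow' : T ^ (α + β - 1) = T ^ α * T ^ (β - 1) := by
    rw [← Real.rpow_add_of_nonneg (by positivity) (by linarith) (by linarith)]; ring_nf
  have h₁ : |(|a + b| ^ α - |a| ^ α)| * |c + d| ^ β ≤ α * T ^ (α + β - 1) * S := by
    calc |(|a + b| ^ α - |a| ^ α)| * |c + d| ^ β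
        ≤ α * (|a| + |b|) ^ (α - 1) * |b| * (|c| + |d|) ^ β := by
          gcongr
          · exact abs_abs_add_rpow_sub_le hα a b
          · exact abs_add_le c d
      _ ≤ α * T ^ (α - 1) * S * T ^ β := by
          gcongr
          all_goals linarith [abs_nonneg a, abs_nonneg b, abs_nonneg c, abs_nonneg d]
      _ = α * T ^ (α + β - 1) * S := by rw [hTpow]; ring
  have h₂ : |a| ^ α * |(|c + d| ^ β - |c| ^ β)| ≤ β * T ^ (α + β - 1) * S := by
    calc |a| ^ α * |(|c + d| ^ β - |c| ^ β)|
        ≤ |a| ^ α * (β * (|c| + |d|) ^ (β - 1) * |d|) := by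
          gcongr
          exact abs_abs_add_rpow_sub_le hβ c d
      _ ≤ T ^ α * (β * T ^ (β - 1) * S) := by
          gcongr
          all_goals linarith [abs_nonneg a, abs_nonneg b, abs_nonneg c, abs_nonneg d]
      _ = β * T ^ (α + β - 1) * S := by rw [hTpow']; ring
  calc |(|a + b| ^ α * |c + d| ^ β - |a| ^ α * |c| ^ β)|
      = |(|a + b| ^ α - |a| ^ α) * |c + d| ^ β + |a| ^ α * (|c + d| ^ β - |c| ^ β)| := by
        ring_nf
    _ ≤ |(|a + b| ^ α - |a| ^ α)| * |c + d| ^ β + |a| ^ α * |(|c + d| ^ β - |c| ^ β)| := by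
        grw [abs_add_le, abs_mul, abs_mul, abs_of_nonneg (by positivity : (0:ℝ) ≤ |c + d| ^ β),
          abs_of_nonneg (by positivity : (0:ℝ) ≤ |a| ^ α)]
    _ ≤ (α + β) * T ^ (α + β - 1) * S := by linarith

theorem exists_add_rpow_mul_le {q ε : ℝ} (hq : 0 ≤ q) (hε : 0 < ε) :
    ∃ C, 0 ≤ C ∧ ∀ R S : ℝ, 0 ≤ R → 0 ≤ S →
      (R + S) ^ q * S ≤ ε * R ^ (q + 1) + C * S ^ (q + 1) := by
  set δ := min 1 (ε / 2 ^ q)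
  have hδ : 0 < δ := lt_min one_pos (by positivity)
  refine ⟨(δ⁻¹ + 1) ^ q, by positivity, fun R S hR hS => ?_⟩
  rcases le_or_gt S (δ * R) with hSR | hRS
  · calc (R + S) ^ q * S ≤ (2 * R) ^ q * (δ * R) := by
          gcongr
          linarith [mul_le_of_le_one_left hR (min_le_left 1 (ε / 2 ^ q))]
      _ = 2 ^ q * δ * R ^ (q + 1) := by
          rw [Real.mul_rpow zero_le_two hR, Real.rpow_add_one' hR (by linarith)]; ring
      _ ≤ ε * R ^ (q + 1) := by
          gcongr
          calc 2 ^ q * δ ≤ 2 ^ q * (ε / 2 ^ q) := by gcongr; exact min_le_right _ _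
            _ = ε := by field_simp
      _ ≤ _ := le_add_of_nonneg_right (by positivity)
  · calc (R + S) ^ q * S ≤ ((δ⁻¹ + 1) * S) ^ q * S := by
          gcongr
          rw [add_mul, inv_mul_eq_div, one_mul]
          gcongr
          exact (le_div_iff₀' hδ).2 hRS.le
      _ = (δ⁻¹ + 1) ^ q * S ^ (q + 1) := by
          rw [Real.mul_rpow (by positivity) hS, Real.rpow_add_one' hS (by linarith)]; ring
      _ ≤ _ := le_add_of_nonneg_left (by positivity)

theorem exists_abs_rpow_mul_rpow_add_sub_sub_le {α β ε : ℝ} (hα : 1 ≤ α) (hβ : 1 ≤ β)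
    (hε : 0 < ε) : ∃ C, 0 ≤ C ∧ ∀ a b c d : ℝ,
      |(|a + b| ^ α * |c + d| ^ β - |a| ^ α * |c| ^ β - |b| ^ α * |d| ^ β)| ≤
        ε * (|a| ^ (α + β) + |c| ^ (α + β)) + C * (|b| ^ (α + β) + |d| ^ (α + β)) := by
  set p := α + β
  have hp : 1 ≤ p := by linarith
  have hK : 0 < p * 2 ^ (p - 1) := by positivity
  obtain ⟨C₀, hC₀, hC₀_le⟩ :=
    exists_add_rpow_mul_le (q := p - 1) (by linarith) (div_pos hε hK)
  refine ⟨p * 2 ^ (p - 1) * C₀ + 1, by positivity, fun a b c d => ?_⟩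
  have hR := Real.rpow_add_le_mul_rpow_add_rpow (abs_nonneg a) (abs_nonneg c) hp
  have hS := Real.rpow_add_le_mul_rpow_add_rpow (abs_nonneg b) (abs_nonneg d) hp
  have hbd := rpow_mul_rpow_le_rpow_add_rpow (abs_nonneg b) (abs_nonneg d)
    (by linarith : 0 ≤ α) (by linarith : 0 ≤ β)
  have hYoung := hC₀_le (|a| + |c|) (|b| + |d|) (by positivity) (by positivity)
  rw [sub_add_cancel] at hYoung
  calc |(|a + b| ^ α * |c + d| ^ β - |a| ^ α * |c| ^ β - |b| ^ α * |d| ^ β)|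
      ≤ |(|a + b| ^ α * |c + d| ^ β - |a| ^ α * |c| ^ β)| + |b| ^ α * |d| ^ β := by
        grw [abs_sub, abs_of_nonneg (by positivity : (0:ℝ) ≤ |b| ^ α * |d| ^ β)]
    _ ≤ p * (ε / (p * 2 ^ (p - 1)) * (|a| + |c|) ^ p + C₀ * (|b| + |d|) ^ p)
        + (|b| ^ p + |d| ^ p) := by
        gcongr
        refine (abs_rpow_mul_rpow_add_sub_le hα hβ a b c d).trans ?_
        rw [mul_assoc]
        gcongr
    _ ≤ p * (ε / (p * 2 ^ (p - 1))) * (2 ^ (p - 1) * (|a| ^ p + |c| ^ p))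
        + p * C₀ * (2 ^ (p - 1) * (|b| ^ p + |d| ^ p)) + (|b| ^ p + |d| ^ p) := by
        rw [mul_add, ← mul_assoc, ← mul_assoc]
        gcongr
    _ = ε * (|a| ^ p + |c| ^ p) + (p * 2 ^ (p - 1) * C₀ + 1) * (|b| ^ p + |d| ^ p) := by
        field_simp
        ring

section BrezisLieb

variable {X : Type*} [MeasurableSpace X] {μ : Measure X}

theorem lintegral_le_of_ae_tendsto {F : ℕ → X → ℝ≥0∞} {f : X → ℝ≥0∞} {M : ℝ≥0∞}
    (hF : ∀ n, AEMeasurable (F n) μ)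
    (hlim : ∀ᵐ x ∂μ, Tendsto (fun n => F n x) atTop (𝓝 (f x)))
    (hM : ∀ n, ∫⁻ x, F n x ∂μ ≤ M) : ∫⁻ x, f x ∂μ ≤ M :=
  calc ∫⁻ x, f x ∂μ = ∫⁻ x, liminf (fun n => F n x) atTop ∂μ :=
        lintegral_congr_ae (hlim.mono fun _ hx => hx.liminf_eq.symm)
    _ ≤ liminf (fun n => ∫⁻ x, F n x ∂μ) atTop := lintegral_liminf_le' hF
    _ ≤ M := liminf_le_of_le (by isBoundedDefault) fun _ hb =>
        hb.exists.choose_spec.trans (hM _)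

theorem tendsto_lintegral_enorm_of_le_mul_add_mul {E : Type*} [NormedAddCommGroup E]
    {g : ℕ → X → E} {Φ : ℕ → X → ℝ≥0∞} {Ψ : X → ℝ≥0∞} {K : ℝ≥0∞}
    (hg : ∀ n, AEStronglyMeasurable (g n) μ) (hΦ : ∀ n, AEMeasurable (Φ n) μ)
    (hg_lim : ∀ᵐ x ∂μ, Tendsto (fun n => g n x) atTop (𝓝 0))
    (hΦK : ∀ n, ∫⁻ x, Φ n x ∂μ ≤ K) (hK : K ≠ ∞) (hΨ : ∫⁻ x, Ψ x ∂μ ≠ ∞)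
    (hle : ∀ ε : ℝ≥0, 0 < ε →
      ∃ C : ℝ≥0, ∀ n, ∀ᵐ x ∂μ, ‖g n x‖ₑ ≤ ε * Φ n x + C * Ψ x) :
    Tendsto (fun n => ∫⁻ x, ‖g n x‖ₑ ∂μ) atTop (𝓝 0) := by
  refine ENNReal.tendsto_nhds_zero.2 fun δ hδ => ?_
  obtain ⟨ε, hε, hεK⟩ := ENNReal.exists_nnreal_pos_mul_lt hK hδ.ne'
  obtain ⟨C, hC⟩ := hle ε hε
  set W : ℕ → X → ℝ≥0∞ := fun n x => ‖g n x‖ₑ - ε * Φ n x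
  have hW : Tendsto (fun n => ∫⁻ x, W n x ∂μ) atTop (𝓝 0) := by
    simpa using tendsto_lintegral_of_dominated_convergence' (fun x => C * Ψ x)
      (fun n => (hg n).enorm.sub ((hΦ n).const_mul _))
      (fun n => (hC n).mono fun x hx => tsub_le_iff_right.2 (hx.trans_eq (add_comm _ _)))
      (by rw [lintegral_const_mul' _ _ ENNReal.coe_ne_top]; exact ENNReal.mul_ne_top (by simp) hΨ)
      (hg_lim.mono fun x hx => tendsto_of_tendsto_of_tendsto_of_le_of_le tendsto_const_nhds
        (by simpa using hx.enorm) (fun _ => zero_le) fun _ => tsub_le_self)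
  have hbound : ∀ n, ∫⁻ x, ‖g n x‖ₑ ∂μ ≤ ∫⁻ x, W n x ∂μ + ε * K := fun n =>
    calc ∫⁻ x, ‖g n x‖ₑ ∂μ ≤ ∫⁻ x, W n x + ε * Φ n x ∂μ := lintegral_mono fun _ => le_tsub_add
      _ = ∫⁻ x, W n x ∂μ + ε * ∫⁻ x, Φ n x ∂μ := by
        rw [lintegral_add_right' _ ((hΦ n).const_mul _),
          lintegral_const_mul' _ _ ENNReal.coe_ne_top]
      _ ≤ ∫⁻ x, W n x ∂μ + ε * K := by gcongr; exact hΦK n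
  have hlim : Tendsto (fun n => ∫⁻ x, W n x ∂μ + ε * K) atTop (𝓝 (ε * K)) := by
    simpa using hW.add_const (ε * K : ℝ≥0∞)
  filter_upwards [hlim.eventually (gt_mem_nhds hεK)] with n hn using (hbound n).trans hn.le

theorem tendsto_lintegral_enorm_rpow_mul_rpow_sub_sub {α β : ℝ} (hα : 1 ≤ α) (hβ : 1 ≤ β)
    {u v : ℕ → X → ℝ} {u₀ v₀ : X → ℝ} {K : ℝ≥0∞}
    (hu : ∀ n, AEMeasurable (u n) μ) (hv : ∀ n, AEMeasurable (v n) μ)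
    (hu₀ : AEMeasurable u₀ μ) (hv₀ : AEMeasurable v₀ μ)
    (hu_lim : ∀ᵐ x ∂μ, Tendsto (fun n => u n x) atTop (𝓝 (u₀ x)))
    (hv_lim : ∀ᵐ x ∂μ, Tendsto (fun n => v n x) atTop (𝓝 (v₀ x)))
    (hΦ : ∀ n,
      ∫⁻ x, ENNReal.ofReal (|u n x - u₀ x| ^ (α + β) + |v n x - v₀ x| ^ (α + β)) ∂μ ≤ K)
    (hK : K ≠ ∞) (hΨ : ∫⁻ x, ENNReal.ofReal (|u₀ x| ^ (α + β) + |v₀ x| ^ (α + β)) ∂μ ≠ ∞) :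
    Tendsto (fun n => ∫⁻ x, ‖|u n x| ^ α * |v n x| ^ β
      - |u n x - u₀ x| ^ α * |v n x - v₀ x| ^ β - |u₀ x| ^ α * |v₀ x| ^ β‖ₑ ∂μ) atTop (𝓝 0) := by
  have hα₀ : 0 ≤ α := by linarith
  have hβ₀ : 0 ≤ β := by linarith
  refine tendsto_lintegral_enorm_of_le_mul_add_mul (fun n => ?_) (fun n => ?_) ?_ hΦ hK hΨ ?_
  · have := hu n; have := hv n; fun_prop
  · have := hu n; have := hv n; fun_prop
  · filter_upwards [hu_lim, hv_lim] with x hux hvx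
    have hux' := hux.sub_const (u₀ x)
    have hvx' := hvx.sub_const (v₀ x)
    rw [sub_self] at hux' hvx'
    convert ((hux.abs.rpow_const (Or.inr hα₀)).mul (hvx.abs.rpow_const (Or.inr hβ₀))).sub
      ((hux'.abs.rpow_const (Or.inr hα₀)).mul (hvx'.abs.rpow_const (Or.inr hβ₀))) |>.sub_const
      (|u₀ x| ^ α * |v₀ x| ^ β) using 2
    simp [Real.zero_rpow (by linarith : α ≠ 0)]
  · intro ε hε
    obtain ⟨C, hC, hC_le⟩ :=
      exists_abs_rpow_mul_rpow_add_sub_sub_le hα hβ (NNReal.coe_pos.2 hε)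
    refine ⟨C.toNNReal, fun n => Eventually.of_forall fun x => ?_⟩
    have h := hC_le (u n x - u₀ x) (u₀ x) (v n x - v₀ x) (v₀ x)
    rw [sub_add_cancel, sub_add_cancel] at h
    rw [Real.enorm_eq_ofReal_abs]
    refine (ENNReal.ofReal_le_ofReal h).trans_eq ?_
    rw [ENNReal.ofReal_add (by positivity) (by positivity), ENNReal.ofReal_mul ε.coe_nonneg,
      ENNReal.ofReal_mul hC, ENNReal.ofReal_coe_nnreal]
    rfl

theorem abs_sub_rpow_add_abs_sub_rpow_le {p : ℝ} (hp : 1 ≤ p) (a b c d : ℝ) :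
    |a - b| ^ p + |c - d| ^ p ≤ 2 ^ (p - 1) * (|a| ^ p + |c| ^ p + (|b| ^ p + |d| ^ p)) := by
  have hab : |a - b| ^ p ≤ 2 ^ (p - 1) * (|a| ^ p + |b| ^ p) :=
    (Real.rpow_le_rpow (abs_nonneg _) (abs_sub a b) (by linarith)).trans
      (Real.rpow_add_le_mul_rpow_add_rpow (abs_nonneg a) (abs_nonneg b) hp)
  have hcd : |c - d| ^ p ≤ 2 ^ (p - 1) * (|c| ^ p + |d| ^ p) :=
    (Real.rpow_le_rpow (abs_nonneg _) (abs_sub c d) (by linarith)).trans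
      (Real.rpow_add_le_mul_rpow_add_rpow (abs_nonneg c) (abs_nonneg d) hp)
  linarith

theorem lintegral_ofReal_abs_sub_rpow_add_le {p : ℝ} (hp : 1 ≤ p) {f g f₀ g₀ : X → ℝ}
    (hf : AEMeasurable f μ) (hg : AEMeasurable g μ) :
    ∫⁻ x, ENNReal.ofReal (|f x - f₀ x| ^ p + |g x - g₀ x| ^ p) ∂μ ≤
      ENNReal.ofReal (2 ^ (p - 1)) * (∫⁻ x, ENNReal.ofReal (|f x| ^ p + |g x| ^ p) ∂μ
        + ∫⁻ x, ENNReal.ofReal (|f₀ x| ^ p + |g₀ x| ^ p) ∂μ) :=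
  calc ∫⁻ x, ENNReal.ofReal (|f x - f₀ x| ^ p + |g x - g₀ x| ^ p) ∂μ
      ≤ ∫⁻ x, ENNReal.ofReal (2 ^ (p - 1)) *
          (ENNReal.ofReal (|f x| ^ p + |g x| ^ p) + ENNReal.ofReal (|f₀ x| ^ p + |g₀ x| ^ p))
          ∂μ := by
        refine lintegral_mono fun x => ?_
        rw [← ENNReal.ofReal_add (by positivity) (by positivity),
          ← ENNReal.ofReal_mul (by positivity)]
        exact ENNReal.ofReal_le_ofReal (abs_sub_rpow_add_abs_sub_rpow_le hp _ _ _ _)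
    _ = _ := by
        rw [lintegral_const_mul' _ _ ENNReal.ofReal_ne_top, lintegral_add_left' (by fun_prop)]

theorem integrable_rpow_mul_rpow {α β : ℝ} (hα : 0 ≤ α) (hβ : 0 ≤ β) {f g : X → ℝ}
    (hf : AEMeasurable f μ) (hg : AEMeasurable g μ)
    (hfg : ∫⁻ x, ENNReal.ofReal (|f x| ^ (α + β) + |g x| ^ (α + β)) ∂μ ≠ ∞) :
    Integrable (fun x => |f x| ^ α * |g x| ^ β) μ := by
  refine ⟨by fun_prop, (lintegral_mono fun x => ?_).trans_lt hfg.lt_top⟩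
  rw [Real.enorm_eq_ofReal_abs, abs_of_nonneg (by positivity)]
  exact ENNReal.ofReal_le_ofReal
    (rpow_mul_rpow_le_rpow_add_rpow (abs_nonneg _) (abs_nonneg _) hα hβ)

theorem tendsto_integral_rpow_mul_rpow_sub {α β : ℝ} (hα : 1 ≤ α) (hβ : 1 ≤ β)
    {u v : ℕ → X → ℝ} {u₀ v₀ : X → ℝ}
    (hu : ∀ n, AEMeasurable (u n) μ) (hv : ∀ n, AEMeasurable (v n) μ)
    (hbdd : ⨆ n, ∫⁻ x, ENNReal.ofReal (|u n x| ^ (α + β) + |v n x| ^ (α + β)) ∂μ < ∞)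
    (hu_lim : ∀ᵐ x ∂μ, Tendsto (fun n => u n x) atTop (𝓝 (u₀ x)))
    (hv_lim : ∀ᵐ x ∂μ, Tendsto (fun n => v n x) atTop (𝓝 (v₀ x))) :
    Tendsto
      (fun n => ∫ x, |u n x| ^ α * |v n x| ^ β - |u n x - u₀ x| ^ α * |v n x - v₀ x| ^ β ∂μ)
      atTop (𝓝 (∫ x, |u₀ x| ^ α * |v₀ x| ^ β ∂μ)) := by
  set M := ⨆ n, ∫⁻ x, ENNReal.ofReal (|u n x| ^ (α + β) + |v n x| ^ (α + β)) ∂μ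
  have hM n : ∫⁻ x, ENNReal.ofReal (|u n x| ^ (α + β) + |v n x| ^ (α + β)) ∂μ ≤ M :=
    le_iSup (fun n => ∫⁻ x, ENNReal.ofReal (|u n x| ^ (α + β) + |v n x| ^ (α + β)) ∂μ) n
  have hu₀ : AEMeasurable u₀ μ := aemeasurable_of_tendsto_metrizable_ae' hu hu_lim
  have hv₀ : AEMeasurable v₀ μ := aemeasurable_of_tendsto_metrizable_ae' hv hv_lim
  have hΨ : ∫⁻ x, ENNReal.ofReal (|u₀ x| ^ (α + β) + |v₀ x| ^ (α + β)) ∂μ ≤ M := by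
    refine lintegral_le_of_ae_tendsto (fun n => by have := hu n; have := hv n; fun_prop) ?_ hM
    filter_upwards [hu_lim, hv_lim] with x hux hvx
    exact ENNReal.tendsto_ofReal ((hux.abs.rpow_const (Or.inr (by linarith))).add
      (hvx.abs.rpow_const (Or.inr (by linarith))))
  have hΦ n := (lintegral_ofReal_abs_sub_rpow_add_le (f₀ := u₀) (g₀ := v₀)
    (by linarith : 1 ≤ α + β) (hu n) (hv n)).trans (mul_le_mul_right (add_le_add (hM n) hΨ) _)
  have hL1 := tendsto_lintegral_enorm_rpow_mul_rpow_sub_sub hα hβ hu hv hu₀ hv₀ hu_lim hv_lim hΦ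
    (by finiteness) (hΨ.trans_lt hbdd).ne
  have hH := integrable_rpow_mul_rpow (by linarith) (by linarith) hu₀ hv₀ (hΨ.trans_lt hbdd).ne
  refine tendsto_integral_of_L1 _ hH.aestronglyMeasurable ?_ hL1
  filter_upwards [hL1.eventually (gt_mem_nhds ENNReal.zero_lt_top)] with n hn
  have hg : Integrable (fun x => |u n x| ^ α * |v n x| ^ β
      - |u n x - u₀ x| ^ α * |v n x - v₀ x| ^ β - |u₀ x| ^ α * |v₀ x| ^ β) μ :=
    ⟨by have := hu n; have := hv n; fun_prop, hn⟩
  exact (hg.add hH).congr (.of_forall fun x => sub_add_cancel _ _)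

theorem integral_mul_coe_eq_integral_withDensity {w : X → ℝ≥0} (hw : Measurable w)
    (f : X → ℝ) : ∫ x, f x * w x ∂μ = ∫ x, f x ∂μ.withDensity (fun x => w x) := by
  rw [integral_withDensity_eq_integral_smul hw]
  simp only [NNReal.smul_def, smul_eq_mul, mul_comm]

theorem lintegral_ofReal_mul_coe_eq_lintegral_withDensity {w : X → ℝ≥0} (hw : Measurable w)
    {f : X → ℝ} (hf : ∀ x, 0 ≤ f x) :
    ∫⁻ x, ENNReal.ofReal (f x * w x) ∂μ =
      ∫⁻ x, ENNReal.ofReal (f x) ∂μ.withDensity (fun x => w x) := by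
  rw [lintegral_withDensity_eq_lintegral_mul_non_measurable _ hw.coe_nnreal_ennreal
    (.of_forall fun _ => ENNReal.coe_lt_top)]
  refine lintegral_congr fun x => ?_
  rw [Pi.mul_apply, ENNReal.ofReal_mul (hf x), ENNReal.ofReal_coe_nnreal, mul_comm]

end BrezisLieb

theorem stmt_16_general (N : ℕ) (s₂ α β : ℝ)
    (hα : 1 < α) (hβ : 1 < β)
    (hαβ : α + β = 2 * ((N : ℝ) - s₂) / ((N : ℝ) - 2))
    (u v : ℕ → EuclideanSpace ℝ (Fin N) → ℝ)
    (hu : ∀ n, Measurable (u n)) (hv : ∀ n, Measurable (v n))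
    (u₀ v₀ : EuclideanSpace ℝ (Fin N) → ℝ)
    (hbdd : (⨆ n, ∫⁻ x, ENNReal.ofReal
        ((|u n x| ^ (2 * ((N : ℝ) - s₂) / ((N : ℝ) - 2))
          + |v n x| ^ (2 * ((N : ℝ) - s₂) / ((N : ℝ) - 2))) * ‖x‖ ^ (-s₂))) < ⊤)
    (haeu : ∀ᵐ (x : EuclideanSpace ℝ (Fin N)) ∂volume,
      Tendsto (fun n => u n x) atTop (nhds (u₀ x)))
    (haev : ∀ᵐ (x : EuclideanSpace ℝ (Fin N)) ∂volume,
      Tendsto (fun n => v n x) atTop (nhds (v₀ x))) :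
    Tendsto (fun n => ∫ x,
        (|u n x| ^ α * |v n x| ^ β - |u n x - u₀ x| ^ α * |v n x - v₀ x| ^ β) * ‖x‖ ^ (-s₂))
      atTop (nhds (∫ x, |u₀ x| ^ α * |v₀ x| ^ β * ‖x‖ ^ (-s₂))) := by
  set w : EuclideanSpace ℝ (Fin N) → ℝ≥0 := fun x => ‖x‖₊ ^ (-s₂)
  have hw : Measurable w := by fun_prop
  have hw_coe : ∀ x, ‖x‖ ^ (-s₂) = (w x : ℝ) := fun x => by simp [w]
  have hμ := withDensity_absolutelyContinuous volume fun x => (w x : ℝ≥0∞)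
  rw [← hαβ] at hbdd
  simp only [hw_coe] at hbdd
  rw [iSup_congr fun n => lintegral_ofReal_mul_coe_eq_lintegral_withDensity hw
    (f := fun x => |u n x| ^ (α + β) + |v n x| ^ (α + β)) fun x => by positivity] at hbdd
  simp only [hw_coe, integral_mul_coe_eq_integral_withDensity hw]
  exact tendsto_integral_rpow_mul_rpow_sub hα.le hβ.le (fun n => (hu n).aemeasurable)
    (fun n => (hv n).aemeasurable) hbdd (hμ.ae_le haeu) (hμ.ae_le haev)

/-- Lemma 4.6: Brezis–Lieb type result for the coupling term `|u|^α |v|^β`. -/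
theorem stmt_16 (N : ℕ) (hN : 3 ≤ N) (s₂ α β : ℝ)
    (hs₂0 : 0 ≤ s₂) (hs₂2 : s₂ < 2) (hα : 1 < α) (hβ : 1 < β)
    (hαβ : α + β = 2 * ((N : ℝ) - s₂) / ((N : ℝ) - 2))
    (u v : ℕ → EuclideanSpace ℝ (Fin N) → ℝ)
    (hu : ∀ n, Measurable (u n)) (hv : ∀ n, Measurable (v n))
    (u₀ v₀ : EuclideanSpace ℝ (Fin N) → ℝ)
    (hbdd : (⨆ n, ∫⁻ x, ENNReal.ofReal
        ((|u n x| ^ (2 * ((N : ℝ) - s₂) / ((N : ℝ) - 2))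
          + |v n x| ^ (2 * ((N : ℝ) - s₂) / ((N : ℝ) - 2))) * ‖x‖ ^ (-s₂))) < ⊤)
    (haeu : ∀ᵐ (x : EuclideanSpace ℝ (Fin N)) ∂volume,
      Tendsto (fun n => u n x) atTop (nhds (u₀ x)))
    (haev : ∀ᵐ (x : EuclideanSpace ℝ (Fin N)) ∂volume,
      Tendsto (fun n => v n x) atTop (nhds (v₀ x))) :
    Tendsto (fun n => ∫ x,
        (|u n x| ^ α * |v n x| ^ β - |u n x - u₀ x| ^ α * |v n x - v₀ x| ^ β) * ‖x‖ ^ (-s₂))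
      atTop (nhds (∫ x, |u₀ x| ^ α * |v₀ x| ^ β * ‖x‖ ^ (-s₂))) :=
  stmt_16_general N s₂ α β hα hβ hαβ u v hu hv u₀ v₀ hbdd haeu haev
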